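/- Let R be a commutative ring, M a finitely generated projective R-module, A = R ⊕ M the trivial square-zero extension, and φ : Ω¹_R → M an R-linear map. Define a second A-module structure on Λ^{k+1}M ⊕ Λ^k M in which r ∈ R acts on Λ^k M by r·ω = rω + φ(dr) ∧ ω, the correction term lying in Λ^{k+1}M, as in the twisted AK complex P_{σ+φ}. If M admits a connection ∇ : M → Ω¹_R ⊗ M, then the map (i, j) ↦ (i + (φ ∧ Λ^k ∇)(j), j) defines an isomorphism of complexes of A-modules between P_σ and P_{σ+φ}. -/
import Mathlib

/-!
STATEMENT 18: Let `R` be a commutative ring, `M` a finitely generated projective `R`-module,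
`A = R ⊕ M` the trivial square-zero extension, `φ : Ω¹_R → M` an `R`-linear map. The twisted
Atiyah–Kashiwara complex `P_{σ+φ}` has the same terms `Λ^{k+1}M ⊕ Λ^k M` and differential
`(a,b) ↦ (b,0)` as `P_σ`, but `r ∈ R` acts on the `Λ^k M`-summand with the extra twist
`φ(dr) ∧ (-)` landing in `Λ^{k+1}M` (while `m ∈ M` acts by wedge in both). If `M` admits a
connection `∇ : M → Ω¹_R ⊗ M` (inducing connections `Λ^k∇` on each `Λ^k M`, given here as a
family of additive maps satisfying the Leibniz rule), then the map
`ψ : (i, j) ↦ (i + (φ ∧ Λ^k∇)(j), j)` is an isomorphism of complexes of `A`-modules from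
`P_σ` to `P_{σ+φ}`: it is bijective in each degree, commutes with the differentials, and
intertwines the two `A = R ⊕ M`-module structures.
-/

open TensorProduct

variable {R M : Type*} [CommRing R] [AddCommGroup M] [Module R M]

/-- Wedge multiplication `M → Λ^k M → Λ^{k+1} M` as a bilinear map. -/
noncomputable def wedgeL (k : ℕ) : M →ₗ[R] ⋀[R]^k M →ₗ[R] ⋀[R]^(k + 1) M :=
  LinearMap.mk₂ R
    (fun m w => ⟨ExteriorAlgebra.ι R m * (w : ExteriorAlgebra R M), by
      have := Submodule.mul_mem_mul (LinearMap.mem_range_self (ExteriorAlgebra.ι R) m) w.2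
      rwa [← pow_succ'] at this⟩)
    (fun m₁ m₂ w => Subtype.ext (by simp [add_mul]))
    (fun c m w => Subtype.ext (by simp [smul_mul_assoc]))
    (fun m w₁ w₂ => Subtype.ext (by simp [mul_add]))
    (fun c m w => Subtype.ext (by simp [mul_smul_comm]))

/-- The term of degree `-k` of the AK complexes: `P_{-k} = Λ^{k+1} M ⊕ Λ^k M`. -/
abbrev akTerm (R M : Type*) [CommRing R] [AddCommGroup M] [Module R M] (k : ℕ) :=
  (⋀[R]^(k + 1) M) × (⋀[R]^k M)

/-- The differential `(a, b) ↦ (b, 0)` (common to `P_σ` and `P_{σ+φ}`). -/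
noncomputable def akD (k : ℕ) : akTerm R M (k + 1) → akTerm R M k :=
  fun x => (x.2, 0)

/-- `φ ∧ (-) : Ω¹ ⊗ Λ^k M → Λ^{k+1} M`, wedging with `φ` applied to the `Ω¹`-factor. -/
noncomputable def phiWedge (φ : (Ω[R⁄ℤ]) →ₗ[R] M) (k : ℕ) :
    (Ω[R⁄ℤ]) ⊗[R] (⋀[R]^k M) →ₗ[R] ⋀[R]^(k + 1) M :=
  TensorProduct.lift ((wedgeL k).comp φ)

set_option synthInstance.maxHeartbeats 1000000 in
theorem stmt18 (R M : Type*) [CommRing R] [AddCommGroup M] [Module R M]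
    [Module.Finite R M] [Module.Projective R M]
    (φ : (Ω[R⁄ℤ]) →ₗ[R] M)
    -- the connections `Λ^k ∇` on the exterior powers induced by a connection `∇` on `M`,
    -- given as additive maps satisfying the Leibniz rule
    (D : ∀ k : ℕ, (⋀[R]^k M) →+ (Ω[R⁄ℤ]) ⊗[R] (⋀[R]^k M))
    (hLeibniz : ∀ (k : ℕ) (r : R) (w : ⋀[R]^k M),
      D k (r • w) = (KaehlerDifferential.D ℤ R r) ⊗ₜ[R] w + r • D k w) :
    -- `ψ_k (i, j) = (i + (φ ∧ Λ^k∇) j, j)`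
    letI ψ : ∀ k : ℕ, akTerm R M k → akTerm R M k :=
      fun k x => (x.1 + phiWedge φ k (D k x.2), x.2)
    -- `ψ` is an isomorphism of complexes of `A`-modules from `P_σ` to `P_{σ+φ}`:
    (∀ k : ℕ, Function.Bijective (ψ k)) ∧
    -- it commutes with the differentials,
    (∀ (k : ℕ) (x : akTerm R M (k + 1)), akD k (ψ (k + 1) x) = ψ k (akD k x)) ∧
    -- it intertwines the `R ⊆ A`-actions (`σ`-action: diagonal; `(σ+φ)`-action: twisted),
    (∀ (k : ℕ) (r : R) (x : akTerm R M k),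
      ψ k (r • x.1, r • x.2) =
        (r • (ψ k x).1 + wedgeL k (φ ((KaehlerDifferential.D ℤ R) r)) (ψ k x).2,
          r • (ψ k x).2)) ∧
    -- it intertwines the `M ⊆ A`-actions (wedge action, identical on both sides).
    (∀ (k : ℕ) (m : M) (x : akTerm R M k),
      ψ k (wedgeL k m x.2, 0) = (wedgeL k m (ψ k x).2, 0)) := by
  refine ⟨?_, ?_, ?_, ?_⟩
  · intro k
    refine Function.bijective_iff_has_inverse.mpr
      ⟨fun x => (x.1 - phiWedge φ k (D k x.2), x.2), fun x => ?_, fun x => ?_⟩ <;>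
      simp
  · intro k x
    show (x.2, (0:⋀[R]^k M)) = (x.2 + phiWedge φ k (D k 0), (0:⋀[R]^k M))
    rw [map_zero, map_zero, add_zero]
  · intro k r x
    simp only [Prod.mk.injEq]
    constructor
    · rw [hLeibniz]
      simp [phiWedge, smul_add]
      abel
    · trivial
  · intro k m x
    simp
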